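/- arXiv:2309.02566 — 4 statements merged into one kernel-verified Lean document; each statement's English description precedes it below -/
import Mathlib

section
/- Suppose the (n+1)×(n+1) Hermitian Toeplitz matrix built from f₀,…,f_n (with entries T_{jk} = f_{j−k} for j ≥ k and conj(f_{k−j}) otherwise, and f₀ real) is positive semidefinite. Then there exists a complex number f_{n+1} with |f_{n+1}| ≤ f₀ such that the (n+2)×(n+2) Hermitian Toeplitz matrix built from f₀,…,f_{n+1} is also positive semidefinite. -/
/-!
Both the leading and the trailing `(n+1) × (n+1)` principal blocks of the extended matrix are the
given Toeplitz matrix `T`, so it suffices to complete a Hermitian matrix whose corner entry is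
unknown but whose two overlapping blocks `S₁` and `S₂` are positive semidefinite. Writing
`S₂ = [[B, w], [wᴴ, b]]`, positivity puts `w = B q` in the range of `B` (write `S₂ = Cᴴ C`; then
`range (Aᴴ A) = range Aᴴ` for the columns `A` of `C` spanning `B`) and makes the Schur complement
`β = b - qᴴ B q` nonnegative. The completion is `Lᴴ S₁ L + diag(0, …, 0, β)` with
`L = [I | (0, q)]`; it is positive semidefinite by construction, and its trailing block is
`[[B, B q], [qᴴ B, qᴴ B q + β]] = S₂`. The bound on the new entry is the `2 × 2` principal minor
on the first and last indices.
-/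

open Matrix ComplexOrder

namespace Matrix

section Bordered

variable {R m : Type*} {k : ℕ}

def snocCol (A : Matrix m (Fin k) R) (u : m → R) : Matrix m (Fin (k + 1)) R :=
  of fun i => Fin.snoc (α := fun _ => R) (A i) (u i)

variable [CommRing R]

theorem snocCol_mulVec_snoc (A : Matrix m (Fin k) R) (u : m → R) (x : Fin k → R) (t : R) :
    snocCol A u *ᵥ Fin.snoc (α := fun _ => R) x t = A *ᵥ x + t • u := by
  ext i; simp [snocCol, mulVec, dotProduct, Fin.sum_univ_castSucc, mul_comm]

variable [StarRing R]

/-- The block matrix `[[S, S u], [uᴴ S, uᴴ S u + β]]`: the bordering of `S` whose new column lies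
in the range of `S` and whose Schur complement is `β`. -/
def bordered (S : Matrix (Fin k) (Fin k) R) (u : Fin k → R) (β : R) :
    Matrix (Fin (k + 1)) (Fin (k + 1)) R :=
  (snocCol 1 u)ᴴ * S * snocCol 1 u + diagonal (Pi.single (Fin.last k) β)

variable (S : Matrix (Fin k) (Fin k) R) (u : Fin k → R) (β : R)

theorem bordered_castSucc_castSucc (i j : Fin k) :
    bordered S u β i.castSucc j.castSucc = S i j := by
  simp [bordered, mul_apply, snocCol, one_apply, apply_ite star, diagonal_apply,
    Fin.castSucc_ne_last]

theorem bordered_submatrix_castSucc :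
    (bordered S u β).submatrix Fin.castSucc Fin.castSucc = S :=
  ext (bordered_castSucc_castSucc S u β)

theorem bordered_castSucc_last (i : Fin k) :
    bordered S u β i.castSucc (Fin.last k) = (S *ᵥ u) i := by
  simp [bordered, mul_apply, snocCol, one_apply, apply_ite star, mulVec, dotProduct]

theorem bordered_last_castSucc (i : Fin k) :
    bordered S u β (Fin.last k) i.castSucc = (star u ᵥ* S) i := by
  simp [bordered, mul_apply, snocCol, one_apply, vecMul, dotProduct,
    (Fin.castSucc_ne_last _).symm]

theorem bordered_last_last :
    bordered S u β (Fin.last k) (Fin.last k) = star u ⬝ᵥ S *ᵥ u + β := by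
  rw [dotProduct_mulVec]
  simp [bordered, mul_apply, snocCol, vecMul, dotProduct]

theorem bordered_mulVec_snoc_neg :
    bordered S u β *ᵥ Fin.snoc (α := fun _ => R) (-u) 1 = Pi.single (Fin.last k) β := by
  rw [bordered, add_mulVec, ← mulVec_mulVec, snocCol_mulVec_snoc, one_mulVec, one_smul,
    neg_add_cancel, mulVec_zero, zero_add]
  ext i
  rcases i.eq_castSucc_or_eq_last with ⟨i, rfl⟩ | rfl <;>
    simp [mulVec_diagonal, Fin.castSucc_ne_last]

theorem bordered_cons_zero_submatrix_succ (S : Matrix (Fin (k + 1)) (Fin (k + 1)) R)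
    (q : Fin k → R) (β : R) :
    (bordered S (Fin.cons 0 q : Fin (k + 1) → R) β).submatrix Fin.succ Fin.succ =
      bordered (S.submatrix Fin.succ Fin.succ) q β := by
  ext i j
  rcases i.eq_castSucc_or_eq_last with ⟨i, rfl⟩ | rfl <;>
    rcases j.eq_castSucc_or_eq_last with ⟨j, rfl⟩ | rfl <;>
    simp only [submatrix_apply, Fin.succ_castSucc, Fin.succ_last, Nat.succ_eq_add_one]
  · rw [bordered_castSucc_castSucc, bordered_castSucc_castSucc, submatrix_apply]
  · rw [bordered_castSucc_last, bordered_castSucc_last]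
    simp [mulVec, dotProduct, Fin.sum_univ_succ]
  · rw [bordered_last_castSucc, bordered_last_castSucc]
    simp [vecMul, dotProduct, Fin.sum_univ_succ]
  · simp [bordered_last_last, mulVec, dotProduct, Fin.sum_univ_succ]

theorem eq_bordered_of_mulVec_eq {M : Matrix (Fin (k + 1)) (Fin (k + 1)) R} (hM : M.IsHermitian)
    {u : Fin k → R}
    (hu : M.submatrix Fin.castSucc Fin.castSucc *ᵥ u = fun i => M i.castSucc (Fin.last k)) :
    M = bordered (M.submatrix Fin.castSucc Fin.castSucc) u
      (M (Fin.last k) (Fin.last k) - star u ⬝ᵥ (M.submatrix Fin.castSucc Fin.castSucc *ᵥ u)) := by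
  ext i j
  rcases i.eq_castSucc_or_eq_last with ⟨i, rfl⟩ | rfl <;>
    rcases j.eq_castSucc_or_eq_last with ⟨j, rfl⟩ | rfl
  · rw [bordered_castSucc_castSucc]; rfl
  · rw [bordered_castSucc_last, hu]
  · have hrow : star u ᵥ* M.submatrix Fin.castSucc Fin.castSucc =
        star (M.submatrix Fin.castSucc Fin.castSucc *ᵥ u) := by
      rw [star_mulVec, (hM.submatrix _).eq]
    rw [bordered_last_castSucc, hrow, hu, ← hM.apply]
    rfl
  · rw [bordered_last_last, add_sub_cancel]

variable [PartialOrder R]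

theorem PosSemidef.bordered [StarOrderedRing R] {S : Matrix (Fin k) (Fin k) R}
    (hS : S.PosSemidef) (u : Fin k → R) {β : R} (hβ : 0 ≤ β) :
    (Matrix.bordered S u β).PosSemidef :=
  (hS.conjTranspose_mul_mul_same _).add (PosSemidef.diagonal (Pi.single_nonneg.mpr hβ))

theorem PosSemidef.nonneg_of_bordered {S : Matrix (Fin k) (Fin k) R} {u : Fin k → R} {β : R}
    (h : (Matrix.bordered S u β).PosSemidef) : 0 ≤ β := by
  simpa [bordered_mulVec_snoc_neg, dotProduct_single] using
    h.dotProduct_mulVec_nonneg (Fin.snoc (α := fun _ => R) (-u) 1)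

end Bordered

theorem range_mulVecLin_conjTranspose_mul_self {m n R : Type*} [Fintype m] [Fintype n] [Field R]
    [PartialOrder R] [StarRing R] [StarOrderedRing R] (A : Matrix m n R) :
    LinearMap.range (Aᴴ * A).mulVecLin = LinearMap.range Aᴴ.mulVecLin := by
  refine Submodule.eq_of_le_of_finrank_le ?_ ?_
  · rw [mulVecLin_mul]
    exact LinearMap.range_comp_le_range _ _
  · change Aᴴ.rank ≤ (Aᴴ * A).rank
    rw [rank_conjTranspose_mul_self, rank_conjTranspose]

section RCLike

variable {𝕜 ι : Type*} [RCLike 𝕜]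

theorem PosSemidef.exists_submatrix_mulVec_eq {κ : Type*} [Fintype ι] [Fintype κ] {M : Matrix ι ι 𝕜}
    (hM : M.PosSemidef) (e : κ → ι) (j : ι) :
    ∃ u, M.submatrix e e *ᵥ u = fun i => M (e i) j := by
  classical
  open scoped MatrixOrder in
  obtain ⟨C, rfl⟩ := CStarAlgebra.nonneg_iff_eq_star_mul_self.mp hM.nonneg
  set A := C.submatrix id e
  have hsub : (star C * C).submatrix e e = Aᴴ * A := by
    ext i k; simp [A, mul_apply]
  have hcol : (fun i => (star C * C) (e i) j) = Aᴴ *ᵥ fun a => C a j := by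
    ext i; simp [A, mulVec, dotProduct, mul_apply]
  rw [hsub, hcol]
  obtain ⟨u, hu⟩ : Aᴴ *ᵥ (fun a => C a j) ∈ LinearMap.range (Aᴴ * A).mulVecLin := by
    rw [range_mulVecLin_conjTranspose_mul_self]
    exact ⟨_, rfl⟩
  exact ⟨u, hu⟩

theorem PosSemidef.norm_apply_sq_le {M : Matrix ι ι 𝕜} (hM : M.PosSemidef) (i j : ι) :
    ‖M i j‖ ^ 2 ≤ RCLike.re (M i i) * RCLike.re (M j j) := by
  classical
  have hdet := (hM.submatrix ![i, j]).det_nonneg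
  rw [det_fin_two] at hdet
  simp only [submatrix_apply, cons_val_zero, cons_val_one] at hdet
  rw [← hM.isHermitian.apply i j, RCLike.star_def, RCLike.conj_mul,
    ← hM.isHermitian.coe_re_apply_self i, ← hM.isHermitian.coe_re_apply_self j,
    ← RCLike.ofReal_pow, ← RCLike.ofReal_mul, ← RCLike.ofReal_sub, RCLike.ofReal_nonneg,
    sub_nonneg] at hdet
  rwa [← hM.isHermitian.apply i j, norm_star]

theorem PosSemidef.exists_completion {k : ℕ} {S₁ S₂ : Matrix (Fin (k + 1)) (Fin (k + 1)) 𝕜}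
    (h₁ : S₁.PosSemidef) (h₂ : S₂.PosSemidef)
    (h : S₁.submatrix Fin.succ Fin.succ = S₂.submatrix Fin.castSucc Fin.castSucc) :
    ∃ N : Matrix (Fin (k + 2)) (Fin (k + 2)) 𝕜, N.PosSemidef ∧
      N.submatrix Fin.castSucc Fin.castSucc = S₁ ∧ N.submatrix Fin.succ Fin.succ = S₂ := by
  obtain ⟨q, hq⟩ := h₂.exists_submatrix_mulVec_eq Fin.castSucc (Fin.last k)
  have hS₂ := eq_bordered_of_mulVec_eq h₂.isHermitian hq
  have hβ := (hS₂ ▸ h₂).nonneg_of_bordered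
  refine ⟨Matrix.bordered S₁ (Fin.cons 0 q) _, h₁.bordered _ hβ, bordered_submatrix_castSucc .., ?_⟩
  rw [bordered_cons_zero_submatrix_succ, h, ← hS₂]

end RCLike

theorem ext_of_submatrix_castSucc_of_submatrix_succ {α : Type*} {k : ℕ}
    {A B : Matrix (Fin (k + 2)) (Fin (k + 2)) α}
    (h₁ : A.submatrix Fin.castSucc Fin.castSucc = B.submatrix Fin.castSucc Fin.castSucc)
    (h₂ : A.submatrix Fin.succ Fin.succ = B.submatrix Fin.succ Fin.succ)
    (h₃ : A 0 (Fin.last _) = B 0 (Fin.last _)) (h₄ : A (Fin.last _) 0 = B (Fin.last _) 0) :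
    A = B := by
  ext i j
  rcases i.eq_castSucc_or_eq_last with ⟨i, rfl⟩ | rfl <;>
    rcases j.eq_castSucc_or_eq_last with ⟨j, rfl⟩ | rfl
  · exact congr_fun₂ h₁ i j
  · rcases i.eq_zero_or_eq_succ with rfl | ⟨i, rfl⟩
    · exact h₃
    · rw [← Fin.succ_castSucc, ← Fin.succ_last]
      exact congr_fun₂ h₂ _ _
  · rcases j.eq_zero_or_eq_succ with rfl | ⟨j, rfl⟩
    · exact h₄
    · rw [← Fin.succ_castSucc, ← Fin.succ_last]
      exact congr_fun₂ h₂ _ _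
  · rw [← Fin.succ_last]
    exact congr_fun₂ h₂ _ _

end Matrix

section Toeplitz

variable {R : Type*} [CommSemiring R] [StarRing R]

def hermToeplitz (f : ℕ → R) (m : ℕ) : Matrix (Fin m) (Fin m) R :=
  of fun j k => if (k : ℕ) ≤ j then f (j - k) else starRingEnd R (f (k - j))

theorem hermToeplitz_submatrix_castSucc (f : ℕ → R) (m : ℕ) :
    (hermToeplitz f (m + 1)).submatrix Fin.castSucc Fin.castSucc = hermToeplitz f m := by
  ext j k; simp [hermToeplitz]

theorem hermToeplitz_submatrix_succ (f : ℕ → R) (m : ℕ) :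
    (hermToeplitz f (m + 1)).submatrix Fin.succ Fin.succ = hermToeplitz f m := by
  ext j k; simp [hermToeplitz]

theorem hermToeplitz_update_of_le (f : ℕ → R) {m N : ℕ} (h : m ≤ N) (c : R) :
    hermToeplitz (Function.update f N c) m = hermToeplitz f m := by
  ext j k
  simp only [hermToeplitz, of_apply]
  split_ifs <;> rw [Function.update_of_ne (by omega)]

end Toeplitz

theorem toeplitz_one_step_extension_general (n : ℕ) (f : ℕ → ℂ)
    (hpsd : (Matrix.of fun j k : Fin (n + 1) =>
        if (k : ℕ) ≤ (j : ℕ) then f ((j : ℕ) - (k : ℕ))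
        else starRingEnd ℂ (f ((k : ℕ) - (j : ℕ)))).PosSemidef) :
    ∃ c : ℂ, ‖c‖ ≤ (f 0).re ∧
      (Matrix.of fun j k : Fin (n + 2) =>
        if (k : ℕ) ≤ (j : ℕ) then Function.update f (n + 1) c ((j : ℕ) - (k : ℕ))
        else starRingEnd ℂ (Function.update f (n + 1) c ((k : ℕ) - (j : ℕ)))).PosSemidef := by
  change (hermToeplitz f (n + 1)).PosSemidef at hpsd
  obtain ⟨N, hN, hN₁, hN₂⟩ := hpsd.exists_completion hpsd
    (by rw [hermToeplitz_submatrix_succ, hermToeplitz_submatrix_castSucc])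
  refine ⟨N (Fin.last _) 0, ?_, ?_⟩
  · have h00 : N 0 0 = f 0 := by simpa [hermToeplitz] using congr_fun₂ hN₁ 0 0
    have hll : N (Fin.last _) (Fin.last _) = f 0 := by
      simpa [hermToeplitz] using congr_fun₂ hN₂ (Fin.last n) (Fin.last n)
    have hf0 : 0 ≤ (f 0).re := (Complex.le_def.mp (h00 ▸ hN.diag_nonneg)).1
    have hsq := hN.norm_apply_sq_le (Fin.last _) 0
    rw [h00, hll, ← sq] at hsq
    exact (pow_le_pow_iff_left₀ (norm_nonneg _) hf0 two_ne_zero).mp hsq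
  · suffices hext : hermToeplitz (Function.update f (n + 1) (N (Fin.last _) 0)) (n + 2) = N by
      rw [← hext] at hN
      exact hN
    apply ext_of_submatrix_castSucc_of_submatrix_succ
    · rw [hermToeplitz_submatrix_castSucc, hermToeplitz_update_of_le _ le_rfl, hN₁]
    · rw [hermToeplitz_submatrix_succ, hermToeplitz_update_of_le _ le_rfl, hN₂]
    · rw [← hN.isHermitian.apply]
      simp [hermToeplitz]
    · simp [hermToeplitz]

theorem toeplitz_one_step_extension (n : ℕ) (f : ℕ → ℂ) (h0 : (f 0).im = 0)
    (hpsd : (Matrix.of fun j k : Fin (n + 1) =>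
        if (k : ℕ) ≤ (j : ℕ) then f ((j : ℕ) - (k : ℕ))
        else starRingEnd ℂ (f ((k : ℕ) - (j : ℕ)))).PosSemidef) :
    ∃ c : ℂ, ‖c‖ ≤ (f 0).re ∧
      (Matrix.of fun j k : Fin (n + 2) =>
        if (k : ℕ) ≤ (j : ℕ) then Function.update f (n + 1) c ((j : ℕ) - (k : ℕ))
        else starRingEnd ℂ (Function.update f (n + 1) c ((k : ℕ) - (j : ℕ)))).PosSemidef :=
  toeplitz_one_step_extension_general n f hpsd
end

section
/- Every positive definite function f defined on the finite set {−n,…,n} ⊂ ℤ (meaning the (n+1)×(n+1) Toeplitz matrix [f(j−k)] is PSD and f(−m)=conj(f(m))) extends to a positive definite function on all of ℤ. -/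
/-!
Write the Toeplitz matrix as a Gram matrix, `f (j - k) = ⟪v j, v k⟫`. Being Toeplitz, it gives the
families `v 0, …, v (n - 1)` and `v 1, …, v n` the same Gram matrix, so the shift `v j ↦ v (j + 1)`
is an isometry between two subspaces, which extends to a linear isometry `W` of the whole
finite-dimensional space. The function `m ↦ ⟪W ^ m v 0, v 0⟫` (conjugated for `m < 0`) is then
positive definite on `ℤ`, its Toeplitz matrices being Gram matrices of the orbit `W ^ j v 0`, and it
agrees with `f` on `{-n, …, n}` because `W ^ j v 0 = v j` for `j ≤ n`.
-/

open Matrix ComplexOrder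
open scoped InnerProductSpace

open MatrixOrder in
theorem Matrix.PosSemidef.exists_eq_gram {𝕜 ι : Type*} [RCLike 𝕜] [Fintype ι]
    {A : Matrix ι ι 𝕜} (hA : A.PosSemidef) : ∃ v : ι → EuclideanSpace 𝕜 ι, A = gram 𝕜 v := by
  classical
  obtain ⟨B, rfl⟩ := CStarAlgebra.nonneg_iff_eq_star_mul_self.mp hA.nonneg
  refine ⟨fun j => WithLp.toLp 2 fun i => B i j, ?_⟩
  ext j k
  simp [gram_apply, Matrix.mul_apply, PiLp.inner_apply, mul_comm]

section GramIsometry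

variable {𝕜 E ι : Type*} [RCLike 𝕜] [NormedAddCommGroup E] [InnerProductSpace 𝕜 E] [Fintype ι]

theorem inner_linearCombination_eq_of_gram_eq {x y : ι → E} (h : gram 𝕜 x = gram 𝕜 y)
    (c d : ι → 𝕜) :
    ⟪Fintype.linearCombination 𝕜 x c, Fintype.linearCombination 𝕜 x d⟫_𝕜 =
      ⟪Fintype.linearCombination 𝕜 y c, Fintype.linearCombination 𝕜 y d⟫_𝕜 := by
  have hxy : ∀ i j, ⟪x i, x j⟫_𝕜 = ⟪y i, y j⟫_𝕜 := fun i j => congr_fun₂ h i j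
  simp only [Fintype.linearCombination_apply, sum_inner, inner_sum, inner_smul_left,
    inner_smul_right, hxy]

theorem exists_linearIsometry_apply_eq_of_gram_eq [FiniteDimensional 𝕜 E] {x y : ι → E}
    (h : gram 𝕜 x = gram 𝕜 y) : ∃ W : E →ₗᵢ[𝕜] E, ∀ i, W (x i) = y i := by
  classical
  set P := Fintype.linearCombination 𝕜 x
  set Q := Fintype.linearCombination 𝕜 y
  have hnorm : ∀ c, ‖Q c‖ = ‖P c‖ := fun c => by
    rw [norm_eq_sqrt_re_inner (𝕜 := 𝕜), norm_eq_sqrt_re_inner (𝕜 := 𝕜),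
      inner_linearCombination_eq_of_gram_eq h]
  have hker : LinearMap.ker P ≤ LinearMap.ker Q := fun c hc => by
    rw [LinearMap.mem_ker, ← norm_eq_zero, hnorm, norm_eq_zero, ← LinearMap.mem_ker]
    exact hc
  let L₀ := (LinearMap.ker P).liftQ Q hker ∘ₗ P.quotKerEquivRange.symm.toLinearMap
  have hL₀ : ∀ c, L₀ ⟨P c, LinearMap.mem_range_self P c⟩ = Q c := fun c => by
    simp [L₀, LinearMap.quotKerEquivRange_symm_apply_image]
  let L : LinearMap.range P →ₗᵢ[𝕜] E :=
    { toLinearMap := L₀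
      norm_map' := by
        rintro ⟨_, c, rfl⟩
        rw [hL₀, hnorm]
        rfl }
  refine ⟨L.extend, fun i => ?_⟩
  have hPi : P (Pi.single i 1) = x i := by simp [P, Fintype.linearCombination_apply_single]
  have hQi : Q (Pi.single i 1) = y i := by simp [Q, Fintype.linearCombination_apply_single]
  rw [← hPi, ← hQi, ← hL₀]
  exact L.extend_apply ⟨P (Pi.single i 1), LinearMap.mem_range_self P _⟩

end GramIsometry

namespace LinearIsometry

variable {𝕜 E : Type*} [RCLike 𝕜] [NormedAddCommGroup E] [InnerProductSpace 𝕜 E]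

theorem inner_pow_add_apply_pow_add_apply (W : E →ₗᵢ[𝕜] E) (x y : E) (a b c : ℕ) :
    ⟪(W ^ (c + a)) x, (W ^ (c + b)) y⟫_𝕜 = ⟪(W ^ a) x, (W ^ b) y⟫_𝕜 := by
  simp only [pow_add, coe_mul, Function.comp_apply, inner_map_map]

def autocorrelation (W : E →ₗᵢ[𝕜] E) (x : E) (m : ℤ) : 𝕜 :=
  ⟪(W ^ m.toNat) x, (W ^ (-m).toNat) x⟫_𝕜

theorem autocorrelation_natCast_sub_natCast (W : E →ₗᵢ[𝕜] E) (x : E) (j k : ℕ) :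
    W.autocorrelation x (j - k) = ⟪(W ^ j) x, (W ^ k) x⟫_𝕜 := by
  rcases le_total k j with h | h
  · obtain ⟨d, rfl⟩ := Nat.exists_eq_add_of_le h
    simpa [autocorrelation] using (inner_pow_add_apply_pow_add_apply W x x d 0 k).symm
  · obtain ⟨d, rfl⟩ := Nat.exists_eq_add_of_le h
    simpa [autocorrelation] using (inner_pow_add_apply_pow_add_apply W x x 0 d j).symm

theorem posSemidef_toeplitz_autocorrelation (W : E →ₗᵢ[𝕜] E) (x : E) (N : ℕ) :
    (Matrix.of fun j k : Fin N => W.autocorrelation x (j - k)).PosSemidef := by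
  convert posSemidef_gram 𝕜 fun j : Fin N => (W ^ (j : ℕ)) x using 1
  ext j k
  exact autocorrelation_natCast_sub_natCast W x j k

end LinearIsometry

theorem posdef_extension_from_window_general (n : ℕ) (f : ℤ → ℂ)
    (hpsd : (Matrix.of fun j k : Fin (n + 1) => f ((j : ℤ) - (k : ℤ))).PosSemidef) :
    ∃ g : ℤ → ℂ,
      (∀ m : ℤ, |m| ≤ n → g m = f m) ∧
      (∀ N : ℕ,
        (Matrix.of fun j k : Fin (N + 1) => g ((j : ℤ) - (k : ℤ))).PosSemidef) := by
  obtain ⟨v, hv⟩ := hpsd.exists_eq_gram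
  have hf : ∀ j k : Fin (n + 1), f (j - k) = ⟪v j, v k⟫_ℂ := fun j k => congr_fun₂ hv j k
  obtain ⟨W, hW⟩ : ∃ W : _ →ₗᵢ[ℂ] _, ∀ j : Fin n, W (v j.castSucc) = v j.succ := by
    refine exists_linearIsometry_apply_eq_of_gram_eq (Matrix.ext fun j k => ?_)
    simp only [gram_apply, ← hf, Fin.val_succ, Fin.val_castSucc]
    congr 1
    push_cast
    ring
  have hWv : ∀ k : Fin (n + 1), (W ^ (k : ℕ)) (v 0) = v k := by
    refine Fin.induction (by simp) fun k ih => ?_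
    rw [Fin.val_succ, pow_succ', LinearIsometry.coe_mul, Function.comp_apply,
      ← Fin.val_castSucc, ih, hW]
  refine ⟨W.autocorrelation (v 0), fun m hm => ?_,
    fun N => W.posSemidef_toeplitz_autocorrelation (v 0) (N + 1)⟩
  rw [abs_le] at hm
  have ha : m.toNat < n + 1 := by omega
  have hb : (-m).toNat < n + 1 := by omega
  rw [← Int.toNat_sub_toNat_neg m, W.autocorrelation_natCast_sub_natCast, hWv ⟨_, ha⟩,
    hWv ⟨_, hb⟩, ← hf]

theorem posdef_extension_from_window (n : ℕ) (f : ℤ → ℂ)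
    (hsym : ∀ m : ℤ, |m| ≤ n → f (-m) = starRingEnd ℂ (f m))
    (hpsd : (Matrix.of fun j k : Fin (n + 1) => f ((j : ℤ) - (k : ℤ))).PosSemidef) :
    ∃ g : ℤ → ℂ,
      (∀ m : ℤ, |m| ≤ n → g m = f m) ∧
      (∀ N : ℕ,
        (Matrix.of fun j k : Fin (N + 1) => g ((j : ℤ) - (k : ℤ))).PosSemidef) :=
  posdef_extension_from_window_general n f hpsd
end

section
/- Let A be a Hermitian matrix with spectral decomposition A = Σ_i λ_i v_i v_iᴴ. Then the matrix A₊ := Σ_{i : λ_i ≥ 0} λ_i v_i v_iᴴ is positive semidefinite and minimizes the Frobenius distance ‖A − X‖_F over all positive semidefinite Hermitian matrices X. -/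
open Matrix ComplexOrder Finset

/-!
Conjugating by the unitary `U` whose columns are the `v i` preserves the Frobenius norm and turns
`A` into `diagonal λ`, `A₊` into `diagonal (max λ 0)` and a positive semidefinite `X` into a
positive semidefinite `Uᴴ X U`. Off-diagonal entries only add to the distance from
`diagonal λ`, and every diagonal entry of a positive semidefinite matrix is a nonnegative real,
no closer to `λ j` than `max (λ j) 0` is.
-/

lemma Finset.sum_filter_nonneg_eq_sum_max_zero {ι M : Type*} [AddCommMonoid M] (s : Finset ι)
    (l : ι → ℝ) (f : ι → ℝ → M) (hf : ∀ i, f i 0 = 0) :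
    ∑ i ∈ s with 0 ≤ l i, f i (l i) = ∑ i ∈ s, f i (max (l i) 0) := by
  rw [sum_filter]
  refine sum_congr rfl fun i _ => ?_
  split_ifs with h
  · rw [max_eq_left h]
  · rw [max_eq_right (le_of_not_ge h), hf]

lemma RCLike.norm_sub_max_zero_le {𝕜 : Type*} [RCLike 𝕜] (l : ℝ) {z : 𝕜} (hz : 0 ≤ z) :
    ‖(l : 𝕜) - (max l 0 : ℝ)‖ ≤ ‖(l : 𝕜) - z‖ := by
  obtain ⟨r, hr, rfl⟩ := RCLike.nonneg_iff_exists_ofReal.mp hz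
  simp only [← RCLike.ofReal_sub, RCLike.norm_ofReal]
  rcases le_total 0 l with hl | hl
  · simp [max_eq_left hl]
  · rw [max_eq_right hl, sub_zero, abs_of_nonpos hl, abs_of_nonpos (by linarith)]
    linarith

namespace Matrix

variable {ι 𝕜 : Type*} [Fintype ι] [RCLike 𝕜]

lemma sum_sq_norm_eq_re_trace {m : Type*} [Fintype m] (M : Matrix m ι 𝕜) :
    ∑ j, ∑ k, ‖M j k‖ ^ 2 = RCLike.re (trace (Mᴴ * M)) := by
  simp only [trace, diag, mul_apply, conjTranspose_apply, map_sum, RCLike.star_def,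
    RCLike.conj_mul, ← RCLike.ofReal_pow, RCLike.ofReal_re]
  exact sum_comm

variable [DecidableEq ι]

lemma sum_sq_norm_unitary_conj {U : Matrix ι ι 𝕜} (hU : U ∈ unitaryGroup ι 𝕜)
    (M : Matrix ι ι 𝕜) :
    ∑ j, ∑ k, ‖(U * M * Uᴴ) j k‖ ^ 2 = ∑ j, ∑ k, ‖M j k‖ ^ 2 := by
  have hUU : Uᴴ * U = 1 := mem_unitaryGroup_iff'.mp hU
  rw [sum_sq_norm_eq_re_trace, sum_sq_norm_eq_re_trace, conjTranspose_mul, conjTranspose_mul,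
    conjTranspose_conjTranspose]
  congr 1
  calc trace (U * (Mᴴ * Uᴴ) * (U * M * Uᴴ)) = trace (U * (Mᴴ * M) * Uᴴ) := by
        simp only [Matrix.mul_assoc, ← Matrix.mul_assoc Uᴴ U, hUU, Matrix.one_mul]
    _ = trace (Mᴴ * M) := by
        rw [trace_mul_cycle, hUU, Matrix.one_mul]

lemma sum_sq_norm_unitary_conj_sub {U : Matrix ι ι 𝕜} (hU : U ∈ unitaryGroup ι 𝕜)
    (M X : Matrix ι ι 𝕜) :
    ∑ j, ∑ k, ‖(U * M * Uᴴ - X) j k‖ ^ 2 = ∑ j, ∑ k, ‖(M - Uᴴ * X * U) j k‖ ^ 2 := by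
  have hUU : U * Uᴴ = 1 := mem_unitaryGroup_iff.mp hU
  have hX : X = U * (Uᴴ * X * U) * Uᴴ := by
    simp only [Matrix.mul_assoc, hUU, Matrix.mul_one, ← Matrix.mul_assoc U Uᴴ, Matrix.one_mul]
  rw [hX, ← Matrix.sub_mul, ← Matrix.mul_sub, sum_sq_norm_unitary_conj hU, ← hX]

lemma sum_sq_norm_diagonal (d : ι → 𝕜) :
    ∑ j, ∑ k, ‖diagonal d j k‖ ^ 2 = ∑ j, ‖d j‖ ^ 2 := by
  refine sum_congr rfl fun j _ => ?_
  rw [sum_eq_single j (fun k _ hk => by simp [diagonal_apply_ne _ (Ne.symm hk)]) (by simp)]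
  simp

lemma sum_sq_norm_diagonal_sub_max_zero_le (l : ι → ℝ) {Y : Matrix ι ι 𝕜}
    (hY : Y.PosSemidef) :
    ∑ j, ∑ k,
        ‖(diagonal (fun i => (l i : 𝕜)) - diagonal (fun i => ((max (l i) 0 : ℝ) : 𝕜))) j k‖ ^ 2 ≤
      ∑ j, ∑ k, ‖(diagonal (fun i => (l i : 𝕜)) - Y) j k‖ ^ 2 := by
  rw [diagonal_sub, sum_sq_norm_diagonal]
  calc ∑ j, ‖(l j : 𝕜) - (max (l j) 0 : ℝ)‖ ^ 2
      ≤ ∑ j, ‖(diagonal (fun i => (l i : 𝕜)) - Y) j j‖ ^ 2 := by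
        refine sum_le_sum fun j _ => pow_le_pow_left₀ (norm_nonneg _) ?_ 2
        simpa using RCLike.norm_sub_max_zero_le (l j) hY.diag_nonneg
    _ ≤ ∑ j, ∑ k, ‖(diagonal (fun i => (l i : 𝕜)) - Y) j k‖ ^ 2 :=
        sum_le_sum fun j _ =>
          single_le_sum (f := fun k => ‖(diagonal (fun i => (l i : 𝕜)) - Y) j k‖ ^ 2)
            (fun _ _ => by positivity) (mem_univ j)

lemma sum_smul_vecMulVec_star_eq_mul_diagonal_mul {R : Type*} [CommSemiring R] [StarRing R]
    (c : ι → R) (v : ι → ι → R) :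
    ∑ i, c i • vecMulVec (v i) (star (v i)) = (of v)ᵀ * diagonal c * (of v)ᵀᴴ := by
  ext j k
  rw [mul_apply]
  simp only [sum_apply, smul_apply, vecMulVec_apply, mul_diagonal, transpose_apply,
    conjTranspose_apply, of_apply, Pi.star_apply, smul_eq_mul]
  exact sum_congr rfl fun i _ => by ring

lemma transpose_of_mem_unitaryGroup {v : ι → ι → 𝕜}
    (horth : ∀ i j, star (v i) ⬝ᵥ v j = if i = j then (1 : 𝕜) else 0) :
    (of v)ᵀ ∈ unitaryGroup ι 𝕜 := by
  rw [mem_unitaryGroup_iff']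
  ext i j
  simpa [mul_apply, dotProduct, one_apply] using horth i j

end Matrix

theorem psd_projection_minimizes_frobenius_general {n : ℕ}
    (A : Matrix (Fin n) (Fin n) ℂ)
    (lam : Fin n → ℝ) (v : Fin n → (Fin n → ℂ))
    (horth : ∀ i j, star (v i) ⬝ᵥ v j = if i = j then (1 : ℂ) else 0)
    (hdecomp : A = ∑ i : Fin n, (lam i : ℂ) • Matrix.vecMulVec (v i) (star (v i)))
    (Aplus : Matrix (Fin n) (Fin n) ℂ)
    (hAplus : Aplus = ∑ i ∈ Finset.univ.filter (fun i => 0 ≤ lam i),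
        (lam i : ℂ) • Matrix.vecMulVec (v i) (star (v i))) :
    Aplus.PosSemidef ∧
    ∀ X : Matrix (Fin n) (Fin n) ℂ, X.PosSemidef →
      Real.sqrt (∑ j : Fin n, ∑ k : Fin n, ‖(A - Aplus) j k‖ ^ 2) ≤
      Real.sqrt (∑ j : Fin n, ∑ k : Fin n, ‖(A - X) j k‖ ^ 2) := by
  set U := (of v)ᵀ
  have hU : U ∈ unitaryGroup (Fin n) ℂ := transpose_of_mem_unitaryGroup horth
  have hA : A = U * diagonal (fun i => (lam i : ℂ)) * Uᴴ := by
    rw [hdecomp, sum_smul_vecMulVec_star_eq_mul_diagonal_mul]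
  have hAplus' : Aplus = U * diagonal (fun i => ((max (lam i) 0 : ℝ) : ℂ)) * Uᴴ := by
    rw [hAplus, sum_filter_nonneg_eq_sum_max_zero univ lam
      (fun i x => (x : ℂ) • vecMulVec (v i) (star (v i))) (by simp),
      sum_smul_vecMulVec_star_eq_mul_diagonal_mul]
  refine ⟨hAplus' ▸ (posSemidef_diagonal_iff.mpr fun i => ?_).mul_mul_conjTranspose_same U,
    fun X hX => ?_⟩
  · exact_mod_cast le_max_right (lam i) 0
  rw [hA, hAplus', ← Matrix.sub_mul, ← Matrix.mul_sub, sum_sq_norm_unitary_conj hU,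
    sum_sq_norm_unitary_conj_sub hU]
  exact Real.sqrt_le_sqrt
    (sum_sq_norm_diagonal_sub_max_zero_le lam (hX.conjTranspose_mul_mul_same U))

theorem psd_projection_minimizes_frobenius {n : ℕ}
    (A : Matrix (Fin n) (Fin n) ℂ) (hA : A.IsHermitian)
    (lam : Fin n → ℝ) (v : Fin n → (Fin n → ℂ))
    (horth : ∀ i j, star (v i) ⬝ᵥ v j = if i = j then (1 : ℂ) else 0)
    (hdecomp : A = ∑ i : Fin n, (lam i : ℂ) • Matrix.vecMulVec (v i) (star (v i)))
    (Aplus : Matrix (Fin n) (Fin n) ℂ)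
    (hAplus : Aplus = ∑ i ∈ Finset.univ.filter (fun i => 0 ≤ lam i),
        (lam i : ℂ) • Matrix.vecMulVec (v i) (star (v i))) :
    Aplus.PosSemidef ∧
    ∀ X : Matrix (Fin n) (Fin n) ℂ, X.PosSemidef →
      Real.sqrt (∑ j : Fin n, ∑ k : Fin n, ‖(A - Aplus) j k‖ ^ 2) ≤
      Real.sqrt (∑ j : Fin n, ∑ k : Fin n, ‖(A - X) j k‖ ^ 2) :=
  psd_projection_minimizes_frobenius_general A lam v horth hdecomp Aplus hAplus
end

section
/- Let H be Hermitian with ρ = e^{−βH}/Tr(e^{−βH}) for β > 0, and let c be any n×n complex matrix. Define G(t) = Tr(ρ e^{iHt} c e^{−iHt} cᴴ). Then G(0) is real and G(0) ≥ |G(t)| for all t ∈ ℝ. -/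
/-!
Diagonalise `H = U diag(λ) Uᴴ` and put `b = Uᴴ c U`. Then
`G t = Z⁻¹ ∑ⱼₖ e^{-βλⱼ} |bⱼₖ|² e^{it(λⱼ - λₖ)}`, a combination of unimodular phases with
nonnegative weights. Its modulus is at most the sum of the weights, which is `G 0`.
-/

open Matrix Complex Unitary

namespace Matrix

variable {m : Type*} [Fintype m] [DecidableEq m]

theorem trace_conjStarAlgAut (u : unitary (Matrix m m ℂ)) (A : Matrix m m ℂ) :
    (conjStarAlgAut ℂ _ u A).trace = A.trace := by
  rw [conjStarAlgAut_apply, trace_mul_cycle, Unitary.coe_star_mul_self, one_mul]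

theorem exp_conjStarAlgAut (u : unitary (Matrix m m ℂ)) (A : Matrix m m ℂ) :
    NormedSpace.exp (conjStarAlgAut ℂ _ u A) = conjStarAlgAut ℂ _ u (NormedSpace.exp A) := by
  simpa using exp_units_conj (toUnits u) A

theorem IsHermitian.exp_smul_eq {H : Matrix m m ℂ} (hH : H.IsHermitian) (s : ℂ) :
    NormedSpace.exp (s • H) = conjStarAlgAut ℂ _ hH.eigenvectorUnitary
      (diagonal fun i => cexp (s * hH.eigenvalues i)) := by
  conv_lhs =>
    rw [hH.spectral_theorem, ← map_smul, exp_conjStarAlgAut, ← diagonal_smul, exp_diagonal]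
  congr 2
  funext i
  simp [Complex.exp_eq_exp_ℂ]

theorem trace_diagonal_mul_mul_diagonal_mul_conjTranspose (d e : m → ℂ) (b : Matrix m m ℂ) :
    (diagonal d * b * diagonal e * bᴴ).trace = ∑ j, ∑ k, d j * e k * normSq (b j k) := by
  simp only [trace, diag, mul_apply, conjTranspose_apply, diagonal_apply, ite_mul, mul_ite,
    zero_mul, mul_zero, Finset.sum_ite_eq, Finset.sum_ite_eq', Finset.mem_univ, if_true,
    Complex.star_def, ← mul_conj]
  refine Finset.sum_congr rfl fun j _ => Finset.sum_congr rfl fun k _ => ?_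
  ring

theorem IsHermitian.trace_exp_smul {H : Matrix m m ℂ} (hH : H.IsHermitian) (s : ℂ) :
    (NormedSpace.exp (s • H)).trace = ∑ i, cexp (s * hH.eigenvalues i) := by
  rw [hH.exp_smul_eq, trace_conjStarAlgAut, trace_diagonal]

theorem IsHermitian.trace_exp_smul_mul_mul_exp_smul_mul_conjTranspose {H : Matrix m m ℂ}
    (hH : H.IsHermitian) (s t : ℂ) (c : Matrix m m ℂ) :
    (NormedSpace.exp (s • H) * c * NormedSpace.exp (t • H) * cᴴ).trace =
      ∑ j, ∑ k, cexp (s * hH.eigenvalues j) * cexp (t * hH.eigenvalues k) *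
        normSq (conjStarAlgAut ℂ _ (star hH.eigenvectorUnitary) c j k) := by
  set φ := conjStarAlgAut ℂ (Matrix m m ℂ) hH.eigenvectorUnitary
  set b := conjStarAlgAut ℂ _ (star hH.eigenvectorUnitary) c
  have hc : c = φ b := by
    simp only [φ, b, ← conjStarAlgAut_symm, StarAlgEquiv.apply_symm_apply]
  have hcH : cᴴ = φ bᴴ := by rw [hc, ← star_eq_conjTranspose, ← map_star, star_eq_conjTranspose]
  rw [hH.exp_smul_eq, hH.exp_smul_eq, hcH, hc, ← map_mul, ← map_mul, ← map_mul,
    trace_conjStarAlgAut, trace_diagonal_mul_mul_diagonal_mul_conjTranspose]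

end Matrix

theorem im_zero_eq_zero_and_norm_le_re_zero {ι : Type*} [Fintype ι] {G : ℝ → ℂ} (w ω : ι → ℝ)
    (hw : ∀ i, 0 ≤ w i) (hG : ∀ t : ℝ, G t = ∑ i, (w i : ℂ) * cexp (t * ω i * I)) :
    (G 0).im = 0 ∧ ∀ t : ℝ, ‖G t‖ ≤ (G 0).re := by
  have hG0 : G 0 = ((∑ i, w i : ℝ) : ℂ) := by simp [hG]
  refine ⟨by rw [hG0, ofReal_im], fun t => ?_⟩
  rw [hG0, ofReal_re, hG]
  calc ‖∑ i, (w i : ℂ) * cexp (t * ω i * I)‖ ≤ ∑ i, ‖(w i : ℂ) * cexp (t * ω i * I)‖ :=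
        norm_sum_le _ _
    _ = ∑ i, w i := by
        simp only [norm_mul, norm_real, Real.norm_of_nonneg (hw _), ← ofReal_mul,
          norm_exp_ofReal_mul_I, mul_one]

theorem gibbs_correlation_bounded_general (n : ℕ)
    (H : Matrix (Fin n) (Fin n) ℂ) (hH : H.IsHermitian)
    (beta : ℝ)
    (rho : Matrix (Fin n) (Fin n) ℂ)
    (hrho : rho = ((NormedSpace.exp ((-beta : ℂ) • H)).trace)⁻¹ •
        NormedSpace.exp ((-beta : ℂ) • H))
    (c : Matrix (Fin n) (Fin n) ℂ)
    (G : ℝ → ℂ)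
    (hG : ∀ t : ℝ, G t = (rho * NormedSpace.exp ((Complex.I * t) • H) * c *
        NormedSpace.exp ((-(Complex.I * t)) • H) * cᴴ).trace) :
    (G 0).im = 0 ∧ ∀ t : ℝ, ‖G t‖ ≤ (G 0).re := by
  set e := hH.eigenvalues
  set b := conjStarAlgAut ℂ _ (star hH.eigenvectorUnitary) c
  set Z : ℝ := ∑ j, Real.exp (-beta * e j)
  have hZ : (NormedSpace.exp ((-beta : ℂ) • H)).trace = Z := by
    rw [hH.trace_exp_smul]
    push_cast [Z, ofReal_exp]
    rfl
  have hZ0 : 0 ≤ Z := Finset.sum_nonneg fun j _ => (Real.exp_pos _).le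
  have hGt : ∀ t : ℝ, G t = (Z : ℂ)⁻¹ * (NormedSpace.exp ((-beta + I * t) • H) * c *
      NormedSpace.exp (-(I * t) • H) * cᴴ).trace := fun t => by
    rw [hG, hrho, smul_mul_assoc, smul_mul_assoc, smul_mul_assoc, smul_mul_assoc, trace_smul,
      ← exp_add_of_commute _ _ (((Commute.refl H).smul_left _).smul_right _), ← add_smul, hZ,
      smul_eq_mul]
  have hexp : ∀ (t : ℝ) j k, cexp ((-beta + I * t) * e j) * cexp (-(I * t) * e k) =
      cexp (-beta * e j) * cexp (t * (e j - e k) * I) := fun t j k => by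
    rw [← Complex.exp_add, ← Complex.exp_add]
    ring_nf
  refine im_zero_eq_zero_and_norm_le_re_zero
    (fun p : Fin n × Fin n => Z⁻¹ * (Real.exp (-beta * e p.1) * normSq (b p.1 p.2)))
    (fun p => e p.1 - e p.2)
    (fun p => mul_nonneg (inv_nonneg.2 hZ0) (mul_nonneg (Real.exp_pos _).le (normSq_nonneg _)))
    fun t => ?_
  rw [hGt, hH.trace_exp_smul_mul_mul_exp_smul_mul_conjTranspose, Fintype.sum_prod_type,
    Finset.mul_sum]
  refine Finset.sum_congr rfl fun j _ => ?_
  rw [Finset.mul_sum]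
  refine Finset.sum_congr rfl fun k _ => ?_
  rw [hexp t j k]
  push_cast [ofReal_exp]
  ring

theorem gibbs_correlation_bounded (n : ℕ)
    (H : Matrix (Fin n) (Fin n) ℂ) (hH : H.IsHermitian)
    (beta : ℝ) (hbeta : 0 < beta)
    (rho : Matrix (Fin n) (Fin n) ℂ)
    (hrho : rho = ((NormedSpace.exp ((-beta : ℂ) • H)).trace)⁻¹ •
        NormedSpace.exp ((-beta : ℂ) • H))
    (c : Matrix (Fin n) (Fin n) ℂ)
    (G : ℝ → ℂ)
    (hG : ∀ t : ℝ, G t = (rho * NormedSpace.exp ((Complex.I * t) • H) * c *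
        NormedSpace.exp ((-(Complex.I * t)) • H) * cᴴ).trace) :
    (G 0).im = 0 ∧ ∀ t : ℝ, ‖G t‖ ≤ (G 0).re :=
  gibbs_correlation_bounded_general n H hH beta rho hrho c G hG
end
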